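/- arXiv:2206.09698 — 3 statements merged into one kernel-verified Lean document; each statement's English description precedes it below -/
import Mathlib

section
/- With c given by the dispersion relation c = ((ρ₊-ρ₀)/(kρ₀))(√(Ω² + kgρ₀/(ρ₊-ρ₀)) - Ω) for ρ₊ > ρ₀ > 0, k, g, Ω > 0, the inequality kc - 2Ω > 0 holds if and only if k > (4Ω²/g)(1 + ρ₀/(ρ₊ - ρ₀)). -/
/-!
Writing `r = ρ₀ / (ρ₊ - ρ₀)`, the dispersion relation reads `k c = (√(Ω² + k g r) - Ω) / r`.
So `k c > 2Ω` means `√(Ω² + k g r) > Ω (1 + 2r)`, and after squaring the `Ω²` terms cancel,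
leaving `k g r > 4Ω² r (1 + r)`, i.e. `k > 4Ω² (1 + r) / g`.
-/

open Real

theorem two_mul_lt_sqrt_sq_add_sub_div_iff {Ω r x : ℝ} (hΩ : 0 ≤ Ω) (hr : 0 < r) :
    2 * Ω < (√(Ω ^ 2 + x * r) - Ω) / r ↔ 4 * Ω ^ 2 * (1 + r) < x :=
  calc 2 * Ω < (√(Ω ^ 2 + x * r) - Ω) / r ↔ Ω * (1 + 2 * r) < √(Ω ^ 2 + x * r) := by
        rw [lt_div_iff₀ hr]; constructor <;> intro h <;> linarith
    _ ↔ (Ω * (1 + 2 * r)) ^ 2 < Ω ^ 2 + x * r := Real.lt_sqrt (by positivity)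
    _ ↔ 4 * Ω ^ 2 * (1 + r) * r < x * r := by constructor <;> intro h <;> linarith
    _ ↔ 4 * Ω ^ 2 * (1 + r) < x := mul_lt_mul_iff_left₀ hr

theorem meridional_decay_wavenumber_bound
    (ρ₀ ρplus k g Ω : ℝ) (hρ₀ : 0 < ρ₀) (hρ : ρ₀ < ρplus) (hk : 0 < k) (hg : 0 < g) (hΩ : 0 < Ω)
    (c : ℝ)
    (hc : c = (ρplus - ρ₀) / (k * ρ₀) * (Real.sqrt (Ω ^ 2 + k * g * ρ₀ / (ρplus - ρ₀)) - Ω)) :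
    0 < k * c - 2 * Ω ↔ k > 4 * Ω ^ 2 / g * (1 + ρ₀ / (ρplus - ρ₀)) := by
  have hr : 0 < ρ₀ / (ρplus - ρ₀) := div_pos hρ₀ (sub_pos.2 hρ)
  have hkc : k * c = (√(Ω ^ 2 + k * g * (ρ₀ / (ρplus - ρ₀))) - Ω) / (ρ₀ / (ρplus - ρ₀)) := by
    rw [hc, ← mul_div_assoc]
    field_simp [hk.ne']
  rw [sub_pos, hkc, two_mul_lt_sqrt_sq_add_sub_div_iff hΩ.le hr, gt_iff_lt, div_mul_eq_mul_div,
    div_lt_iff₀ hg]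
end

section
/- Let G(s,r) = ρ₊κβc s²/2 + ρ₀(kc²-2Ωc)(e^{-2k(r+f(s))}/(2k) + r) with all constants positive, kc - 2Ω > 0, f(s) = βs²/(2(kc-2Ω)). Suppose r₀: (-s₀, s₀) → [0,∞) satisfies G(s, r₀(s)) = G(0,0) with r₀(0) = 0 and is differentiable at points where G_r > 0. Then for s ≠ 0, r₀'(s) = -βcs(ρ₊κ - ρ₀e^{-2ξ₀})/(ρ₀(kc²-2Ωc)(1 - e^{-2ξ₀})) where ξ₀ = k(r₀(s)+f(s)); and the sign condition r₀'(s) ≥ 0 for s > 0 (and ≤ 0 for s < 0) near the equator forces κ < ρ₀/ρ₊ < 1. -/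
/-!
Along the curve `s ↦ (s, r₀ s)` the function `G` is constant, so its total derivative vanishes;
solving for `r₀'` gives the slope formula, whose denominator is positive because
`ξ₀ = k (r₀ s + f s) > 0` off the equator. At any `s > 0` the sign condition then forces
`ρ₊ κ ≤ ρ₀ e^{-2ξ₀} < ρ₀`.
-/

open Real Filter Topology

theorem hasDerivAt_exp_neg_div_add {r f : ℝ → ℝ} {r' f' s k : ℝ} (hk : k ≠ 0)
    (hr : HasDerivAt r r' s) (hf : HasDerivAt f f' s) :
    HasDerivAt (fun t => exp (-(2 * k * (r t + f t))) / (2 * k) + r t)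
      (r' * (1 - exp (-(2 * k * (r s + f s)))) - exp (-(2 * k * (r s + f s))) * f') s := by
  refine ((((hr.add hf).const_mul (2 * k)).neg.exp.div_const (2 * k)).add hr).congr_deriv ?_
  simp only [Pi.neg_apply, Pi.add_apply]
  field_simp
  ring

theorem deriv_mul_eq_of_eventually_eq_const {r f : ℝ → ℝ} {f' s k A B C : ℝ} (hk : k ≠ 0)
    (hr : DifferentiableAt ℝ r s) (hf : HasDerivAt f f' s)
    (hconst : ∀ᶠ t in 𝓝 s, A * t ^ 2 / 2 + B * (exp (-(2 * k * (r t + f t))) / (2 * k) + r t) = C) :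
    deriv r s * (B * (1 - exp (-(2 * k * (r s + f s))))) =
      B * exp (-(2 * k * (r s + f s))) * f' - A * s := by
  have hzero : HasDerivAt
      (fun t => A * t ^ 2 / 2 + B * (exp (-(2 * k * (r t + f t))) / (2 * k) + r t)) 0 s :=
    (hasDerivAt_const s C).congr_of_eventuallyEq hconst
  have hcalc := (((hasDerivAt_pow 2 s).const_mul A).div_const 2).add
    ((hasDerivAt_exp_neg_div_add hk hr.hasDerivAt hf).const_mul B)
  have := hcalc.unique hzero
  push_cast at this
  linear_combination this

theorem exp_neg_lt_one_of_nonneg_of_pos {k x y : ℝ} (hk : 0 < k) (hx : 0 ≤ x) (hy : 0 < y) :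
    exp (-(2 * k * (x + y))) < 1 := by
  rw [exp_lt_one_iff, neg_lt_zero]
  positivity

section Thermocline

variable {ρ₀ ρplus κ β c k Ω : ℝ}

theorem deriv_eq_thermocline_slope {r f : ℝ → ℝ} {s C : ℝ} (hρ₀ : 0 < ρ₀) (hk : 0 < k)
    (h1 : 0 < k * c ^ 2 - 2 * Ω * c) (h2 : 0 < k * c - 2 * Ω)
    (hf : ∀ t, f t = β * t ^ 2 / (2 * (k * c - 2 * Ω))) (hr : DifferentiableAt ℝ r s)
    (hE : exp (-(2 * k * (r s + f s))) < 1)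
    (hconst : ∀ᶠ t in 𝓝 s, ρplus * κ * β * c * t ^ 2 / 2 + ρ₀ * (k * c ^ 2 - 2 * Ω * c) *
        (exp (-(2 * k * (r t + f t))) / (2 * k) + r t) = C) :
    deriv r s = -(β * c * s * (ρplus * κ - ρ₀ * exp (-(2 * k * (r s + f s)))))
      / (ρ₀ * (k * c ^ 2 - 2 * Ω * c) * (1 - exp (-(2 * k * (r s + f s))))) := by
  have hf' : HasDerivAt f (β * s / (k * c - 2 * Ω)) s := by
    rw [show f = fun t => β * t ^ 2 / (2 * (k * c - 2 * Ω)) from funext hf]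
    refine (((hasDerivAt_pow 2 s).const_mul β).div_const (2 * (k * c - 2 * Ω))).congr_deriv ?_
    norm_num
    field_simp
  have hmul := deriv_mul_eq_of_eventually_eq_const hk.ne' hr hf' hconst
  have hden : 0 < 1 - exp (-(2 * k * (r s + f s))) := sub_pos.2 hE
  rw [eq_div_iff (by positivity)]
  field_simp at hmul ⊢
  linear_combination hmul

theorem kappa_lt_of_thermocline_slope_nonneg {s d E : ℝ} (hρ₀ : 0 < ρ₀) (hρplus : 0 < ρplus)
    (hβ : 0 < β) (hc : 0 < c) (h1 : 0 < k * c ^ 2 - 2 * Ω * c) (hs : 0 < s) (hE : E < 1)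
    (hslope : d = -(β * c * s * (ρplus * κ - ρ₀ * E)) / (ρ₀ * (k * c ^ 2 - 2 * Ω * c) * (1 - E)))
    (hd : 0 ≤ d) : κ < ρ₀ / ρplus := by
  have hden : 0 < ρ₀ * (k * c ^ 2 - 2 * Ω * c) * (1 - E) := by
    have := sub_pos.2 hE
    positivity
  rw [hslope, neg_div, neg_nonneg, div_le_iff₀ hden, zero_mul] at hd
  have hnum : ρplus * κ ≤ ρ₀ * E := sub_nonpos.1 (nonpos_of_mul_nonpos_right hd (by positivity))
  rw [lt_div_iff₀ hρplus]
  nlinarith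

end Thermocline

theorem thermocline_slope_and_kappa_bound_general
    (ρ₀ ρplus κ β c k Ω s₀ : ℝ)
    (hρ₀ : 0 < ρ₀) (hρplus : 0 < ρplus) (hρ : ρ₀ < ρplus) (hβ : 0 < β) (hc : 0 < c)
    (hk : 0 < k) (h1 : 0 < k * c ^ 2 - 2 * Ω * c) (h2 : 0 < k * c - 2 * Ω) (hs₀ : 0 < s₀)
    (f : ℝ → ℝ) (hf : ∀ s, f s = β * s ^ 2 / (2 * (k * c - 2 * Ω)))
    (G : ℝ → ℝ → ℝ)
    (hG : ∀ s r, G s r = ρplus * κ * β * c * s ^ 2 / 2 +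
        ρ₀ * (k * c ^ 2 - 2 * Ω * c) * (Real.exp (-(2 * k * (r + f s))) / (2 * k) + r))
    (r₀ : ℝ → ℝ)
    (hnonneg : ∀ s ∈ Set.Ioo (-s₀) s₀, 0 ≤ r₀ s)
    (hlevel : ∀ s ∈ Set.Ioo (-s₀) s₀, G s (r₀ s) = G 0 0)
    (hdiff : ∀ s ∈ Set.Ioo (-s₀) s₀, s ≠ 0 → DifferentiableAt ℝ r₀ s) :
    (∀ s ∈ Set.Ioo (-s₀) s₀, s ≠ 0 →
      deriv r₀ s = -(β * c * s * (ρplus * κ - ρ₀ * Real.exp (-(2 * k * (r₀ s + f s)))))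
          / (ρ₀ * (k * c ^ 2 - 2 * Ω * c) * (1 - Real.exp (-(2 * k * (r₀ s + f s)))))) ∧
    ((∀ s ∈ Set.Ioo (-s₀) s₀, (0 < s → 0 ≤ deriv r₀ s) ∧ (s < 0 → deriv r₀ s ≤ 0)) →
      κ < ρ₀ / ρplus ∧ ρ₀ / ρplus < 1) := by
  have hE : ∀ s ∈ Set.Ioo (-s₀) s₀, s ≠ 0 → exp (-(2 * k * (r₀ s + f s))) < 1 := fun s hs hs0 =>
    exp_neg_lt_one_of_nonneg_of_pos hk (hnonneg s hs) (by rw [hf]; positivity)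
  have hslope : ∀ s ∈ Set.Ioo (-s₀) s₀, s ≠ 0 →
      deriv r₀ s = -(β * c * s * (ρplus * κ - ρ₀ * Real.exp (-(2 * k * (r₀ s + f s)))))
          / (ρ₀ * (k * c ^ 2 - 2 * Ω * c) * (1 - Real.exp (-(2 * k * (r₀ s + f s))))) := by
    intro s hs hs0
    refine deriv_eq_thermocline_slope hρ₀ hk h1 h2 hf (hdiff s hs hs0) (hE s hs hs0) (C := G 0 0) ?_
    filter_upwards [Ioo_mem_nhds hs.1 hs.2] with t ht
    rw [← hG, hlevel t ht]
  refine ⟨hslope, fun hsign => ⟨?_, (div_lt_one hρplus).2 hρ⟩⟩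
  have hs : s₀ / 2 ∈ Set.Ioo (-s₀) s₀ := ⟨by linarith, by linarith⟩
  have hpos : 0 < s₀ / 2 := by positivity
  exact kappa_lt_of_thermocline_slope_nonneg hρ₀ hρplus hβ hc h1 hpos (hE _ hs hpos.ne')
    (hslope _ hs hpos.ne') ((hsign _ hs).1 hpos)

theorem thermocline_slope_and_kappa_bound
    (ρ₀ ρplus κ β c k Ω s₀ : ℝ)
    (hρ₀ : 0 < ρ₀) (hρplus : 0 < ρplus) (hρ : ρ₀ < ρplus) (hκ : 0 < κ) (hβ : 0 < β) (hc : 0 < c)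
    (hk : 0 < k) (h1 : 0 < k * c ^ 2 - 2 * Ω * c) (h2 : 0 < k * c - 2 * Ω) (hs₀ : 0 < s₀)
    (f : ℝ → ℝ) (hf : ∀ s, f s = β * s ^ 2 / (2 * (k * c - 2 * Ω)))
    (G : ℝ → ℝ → ℝ)
    (hG : ∀ s r, G s r = ρplus * κ * β * c * s ^ 2 / 2 +
        ρ₀ * (k * c ^ 2 - 2 * Ω * c) * (Real.exp (-(2 * k * (r + f s))) / (2 * k) + r))
    (r₀ : ℝ → ℝ) (hr₀0 : r₀ 0 = 0) (hcont : ContinuousOn r₀ (Set.Ioo (-s₀) s₀))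
    (hnonneg : ∀ s ∈ Set.Ioo (-s₀) s₀, 0 ≤ r₀ s)
    (hlevel : ∀ s ∈ Set.Ioo (-s₀) s₀, G s (r₀ s) = G 0 0)
    (hdiff : ∀ s ∈ Set.Ioo (-s₀) s₀, s ≠ 0 → DifferentiableAt ℝ r₀ s) :
    (∀ s ∈ Set.Ioo (-s₀) s₀, s ≠ 0 →
      deriv r₀ s = -(β * c * s * (ρplus * κ - ρ₀ * Real.exp (-(2 * k * (r₀ s + f s)))))
          / (ρ₀ * (k * c ^ 2 - 2 * Ω * c) * (1 - Real.exp (-(2 * k * (r₀ s + f s)))))) ∧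
    ((∀ s ∈ Set.Ioo (-s₀) s₀, (0 < s → 0 ≤ deriv r₀ s) ∧ (s < 0 → deriv r₀ s ≤ 0)) →
      κ < ρ₀ / ρplus ∧ ρ₀ / ρplus < 1) :=
  thermocline_slope_and_kappa_bound_general ρ₀ ρplus κ β c k Ω s₀ hρ₀ hρplus hρ hβ hc hk h1 h2 hs₀ f
    hf G hG r₀ hnonneg hlevel hdiff
end

section
/- Suppose the pressure in Lagrangian labels satisfies P_q = -ρ₀(kc² - 2Ωc + g)e^{-k(r+f(s))} sin(k(q-ct)) and P_s = -ρ₀(kc²-2Ωc) f'(s) e^{-2k(r+f(s))} - ρ₀(βcs + f'(s)g) e^{-k(r+f(s))} cos(k(q-ct)), for a twice differentiable P and smooth f with f(0) = 0. Then equality of mixed partials P_{qs} = P_{sq} forces f'(s) = βs/(kc - 2Ω), i.e. f(s) = βs²/(2(kc - 2Ω)), provided kc - 2Ω ≠ 0. -/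
/-!
Integrating `P_q` in `q` gives
`P(q, s) = P(ct, s) + (A / k) e^{-k(r + f s)} (cos k(q - ct) - 1)` with `A = ρ₀(kc² - 2Ωc + g)`.
Differentiating in `s` and subtracting the values at `q = ct + π/k` and `q = ct` kills the
`q`-independent part of `P_s`; comparing the two remaining `e^{-k(r + f s)}` terms leaves
`c (kc - 2Ω) f'(s) = β c s`. Integrating once more, using `f 0 = 0`, gives `f`.
-/

open Real Set

theorem eq_add_cos_sub_one_of_deriv_eq {φ : ℝ → ℝ} {a k x₀ : ℝ} (hk : k ≠ 0)
    (hφ : Differentiable ℝ φ) (hφ' : ∀ x, deriv φ x = -a * sin (k * (x - x₀))) (x : ℝ) :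
    φ x = φ x₀ + a / k * (cos (k * (x - x₀)) - 1) := by
  have hprim : ∀ x, HasDerivAt (fun x => φ x₀ + a / k * (cos (k * (x - x₀)) - 1))
      (-a * sin (k * (x - x₀))) x := by
    intro x
    have hlin : HasDerivAt (fun x => k * (x - x₀)) k x := by
      simpa using ((hasDerivAt_id x).sub_const x₀).const_mul k
    exact (((hlin.cos.sub_const 1).const_mul (a / k)).const_add (φ x₀)).congr_deriv
      (by field_simp)
  exact isOpen_univ.eqOn_of_deriv_eq isPreconnected_univ hφ.differentiableOn
    (fun x _ => (hprim x).differentiableAt.differentiableWithinAt)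
    (fun x _ => by rw [hφ', (hprim x).deriv]) (mem_univ x₀) (by simp) (mem_univ x)

theorem eq_mul_sq_div_two_of_deriv_eq {f : ℝ → ℝ} {b : ℝ} (hf : Differentiable ℝ f)
    (h0 : f 0 = 0) (hf' : ∀ x, deriv f x = b * x) (x : ℝ) : f x = b * x ^ 2 / 2 := by
  have hprim : ∀ x, HasDerivAt (fun x : ℝ => b * x ^ 2 / 2) (b * x) x := by
    intro x
    exact (((hasDerivAt_pow 2 x).const_mul b).div_const 2).congr_deriv (by ring)
  exact isOpen_univ.eqOn_of_deriv_eq isPreconnected_univ hf.differentiableOn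
    (fun x _ => (hprim x).differentiableAt.differentiableWithinAt)
    (fun x _ => by rw [hf', (hprim x).deriv]) (mem_univ 0) (by simp [h0]) (mem_univ x)

theorem deriv_eq_deriv_add_mul_of_eq_add_mul {u v Φ : ℝ → ℝ} {Φ' w s : ℝ}
    (h : ∀ y, u y = v y + Φ y * w) (hv : DifferentiableAt ℝ v s) (hΦ : HasDerivAt Φ Φ' s) :
    deriv u s = deriv v s + Φ' * w := by
  rw [funext h]
  exact (hv.hasDerivAt.add (hΦ.mul_const w)).deriv

theorem hasDerivAt_exp_neg_mul_add {f : ℝ → ℝ} {f' k r s : ℝ} (hf : HasDerivAt f f' s) :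
    HasDerivAt (fun s => exp (-(k * (r + f s)))) (exp (-(k * (r + f s))) * -(k * f')) s :=
  ((hf.const_add r).const_mul k).neg.exp

theorem mixed_partials_force_decay_function_general
    (ρ₀ k c Ω β g r t : ℝ)
    (hρ₀ : 0 < ρ₀) (hk : 0 < k) (hc : c ≠ 0)
    (hkc : k * c - 2 * Ω ≠ 0)
    (P : ℝ → ℝ → ℝ) (hP : ContDiff ℝ 2 (fun p : ℝ × ℝ => P p.1 p.2))
    (f : ℝ → ℝ) (hfsmooth : ContDiff ℝ 2 f) (hf0 : f 0 = 0)
    (hPq : ∀ q s, deriv (fun q' => P q' s) q =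
      -ρ₀ * (k * c ^ 2 - 2 * Ω * c + g) * Real.exp (-(k * (r + f s))) * Real.sin (k * (q - c * t)))
    (hPs : ∀ q s, deriv (fun s' => P q s') s =
      -ρ₀ * (k * c ^ 2 - 2 * Ω * c) * deriv f s * Real.exp (-(2 * k * (r + f s)))
        - ρ₀ * (β * c * s + deriv f s * g) * Real.exp (-(k * (r + f s))) * Real.cos (k * (q - c * t))) :
    (∀ s, deriv f s = β * s / (k * c - 2 * Ω)) ∧
    (∀ s, f s = β * s ^ 2 / (2 * (k * c - 2 * Ω))) := by
  have hPd := hP.differentiable two_ne_zero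
  have hPq_diff : ∀ s, Differentiable ℝ (fun q => P q s) := fun s =>
    hPd.comp (differentiable_id.prodMk (differentiable_const s))
  have hPs_diff : ∀ q, Differentiable ℝ (fun s => P q s) := fun q =>
    hPd.comp ((differentiable_const q).prodMk differentiable_id)
  have hfd : Differentiable ℝ f := hfsmooth.differentiable two_ne_zero
  set A := ρ₀ * (k * c ^ 2 - 2 * Ω * c + g)
  have hsplit : ∀ s q, P q s = P (c * t) s + A * exp (-(k * (r + f s))) / k *
      (cos (k * (q - c * t)) - 1) := fun s =>
    eq_add_cos_sub_one_of_deriv_eq hk.ne' (hPq_diff s) (fun q => by rw [hPq]; ring)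
  have hcos : cos (k * (c * t + π / k - c * t)) = -1 := by
    rw [add_sub_cancel_left, mul_div_cancel₀ π hk.ne', cos_pi]
  have hderiv : ∀ s, deriv f s = β * s / (k * c - 2 * Ω) := by
    intro s
    have hcompare := deriv_eq_deriv_add_mul_of_eq_add_mul
      (u := fun s => P (c * t + π / k) s) (w := -2)
      (fun s => by rw [hsplit s (c * t + π / k), hcos]; ring) (hPs_diff (c * t) s)
      (((hasDerivAt_exp_neg_mul_add (hfd s).hasDerivAt).const_mul A).div_const k)
    rw [hPs, hPs, hcos, sub_self, mul_zero, cos_zero] at hcompare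
    have hbalance : (2 * ρ₀ * exp (-(k * (r + f s))) * c) * (deriv f s * (k * c - 2 * Ω)) =
        (2 * ρ₀ * exp (-(k * (r + f s))) * c) * (β * s) := by
      field_simp at hcompare
      linear_combination -hcompare
    rw [eq_div_iff hkc]
    exact mul_left_cancel₀ (by positivity) hbalance
  refine ⟨hderiv, fun s => ?_⟩
  rw [eq_mul_sq_div_two_of_deriv_eq hfd hf0 (b := β / (k * c - 2 * Ω))
    (fun s => by rw [hderiv]; ring)]
  field_simp

theorem mixed_partials_force_decay_function
    (ρ₀ k c Ω β g r t : ℝ)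
    (hρ₀ : 0 < ρ₀) (hk : 0 < k) (hc : c ≠ 0) (hΩ : 0 < Ω) (hβ : 0 < β) (hg : 0 < g)
    (hkc : k * c - 2 * Ω ≠ 0)
    (P : ℝ → ℝ → ℝ) (hP : ContDiff ℝ 2 (fun p : ℝ × ℝ => P p.1 p.2))
    (f : ℝ → ℝ) (hfsmooth : ContDiff ℝ 2 f) (hf0 : f 0 = 0)
    (hPq : ∀ q s, deriv (fun q' => P q' s) q =
      -ρ₀ * (k * c ^ 2 - 2 * Ω * c + g) * Real.exp (-(k * (r + f s))) * Real.sin (k * (q - c * t)))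
    (hPs : ∀ q s, deriv (fun s' => P q s') s =
      -ρ₀ * (k * c ^ 2 - 2 * Ω * c) * deriv f s * Real.exp (-(2 * k * (r + f s)))
        - ρ₀ * (β * c * s + deriv f s * g) * Real.exp (-(k * (r + f s))) * Real.cos (k * (q - c * t))) :
    (∀ s, deriv f s = β * s / (k * c - 2 * Ω)) ∧
    (∀ s, f s = β * s ^ 2 / (2 * (k * c - 2 * Ω))) :=
  mixed_partials_force_decay_function_general ρ₀ k c Ω β g r t hρ₀ hk hc hkc P hP f hfsmooth hf0 hPq
    hPs
end
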